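/- arXiv:math/0505664 — 4 statements merged into one kernel-verified Lean document; each statement's English description precedes it below -/
import Mathlib

section
/- Let A = diag(a₁, A₋) be a diagonal matrix in M_N(ℂ) with first entry a₁ and remaining (N−1)×(N−1) diagonal block A₋, and let B be Hermitian. Writing, for U ∈ U(N), the conjugate B̃ = U B U* in block form with (1,1) entry b̃₁₁ and lower-right (N−1)×(N−1) block B̃₋₋, one has I_N(A,B) = ∫_{U(N)} exp(N a₁ b̃₁₁) · I_{N−1}((N/(N−1))·A₋, B̃₋₋) dm_N(U). -/
open MeasureTheory Matrix
open scoped BigOperators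

noncomputable instance unitaryGroupMeasurableSpace (n : ℕ) :
    MeasurableSpace (Matrix.unitaryGroup (Fin n) ℂ) := borel _

instance unitaryGroupBorelSpace (n : ℕ) :
    BorelSpace (Matrix.unitaryGroup (Fin n) ℂ) := ⟨rfl⟩

/-- The Itzykson–Zuber integral `∫ exp(N·Re Tr(A U B U*)) dμ(U)`. -/
noncomputable def IZ (N : ℕ) (μ : Measure (Matrix.unitaryGroup (Fin N) ℂ))
    (A B : Matrix (Fin N) (Fin N) ℂ) : ℝ :=
  ∫ U : Matrix.unitaryGroup (Fin N) ℂ,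
    Real.exp (N * (Matrix.trace (A * (U : Matrix (Fin N) (Fin N) ℂ) * B *
      star (U : Matrix (Fin N) (Fin N) ℂ))).re) ∂μ

/-- `μ` is a bi-invariant (Haar) probability measure on the unitary group. -/
def IsHaarProb (N : ℕ) (μ : Measure (Matrix.unitaryGroup (Fin N) ℂ)) : Prop :=
  IsProbabilityMeasure μ ∧
  (∀ V : Matrix.unitaryGroup (Fin N) ℂ, μ.map (fun U => V * U) = μ) ∧
  (∀ V : Matrix.unitaryGroup (Fin N) ℂ, μ.map (fun U => U * V) = μ)

/-!
Left translation by the copy `diag(1, V)` of `U(N)` inside `U(N + 1)` preserves Haar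
measure, so by Fubini the integrand may be averaged over `V` first. Such a translate leaves
the `(1,1)` entry of `B̃ = U B U*` unchanged and conjugates the block `B̃₋₋` by `V`; as `A` is
diagonal, the trace splits as `a₁ b̃₁₁ + Tr(A₋ V B̃₋₋ V*)`, and the `V`-integral of the second
exponential is the smaller Itzykson–Zuber integral with the rescaled `A₋`.
-/

namespace Matrix

instance {m n R : Type*} [Finite m] [Finite n] [TopologicalSpace R] [SecondCountableTopology R] :
    SecondCountableTopology (Matrix m n R) :=
  inferInstanceAs (SecondCountableTopology (m → n → R))

section UnitaryGroup

variable {n 𝕜 : Type*} [Fintype n] [DecidableEq n] [RCLike 𝕜]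

theorem isCompact_unitaryGroup : IsCompact (unitaryGroup n 𝕜 : Set (Matrix n n 𝕜)) :=
  (isCompact_univ_pi fun _ => isCompact_univ_pi fun _ => isCompact_closedBall (0 : 𝕜) 1)
    |>.of_isClosed_subset (isClosed_unitary (R := Matrix n n 𝕜)) fun _ hU i _ j _ =>
      mem_closedBall_zero_iff.2 (entry_norm_bound_of_unitary hU i j)

instance : CompactSpace (unitaryGroup n 𝕜) :=
  isCompact_iff_compactSpace.mp isCompact_unitaryGroup

instance : SecondCountableTopology (unitaryGroup n 𝕜) :=
  TopologicalSpace.Subtype.secondCountableTopology _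

end UnitaryGroup

end Matrix

section HaarAveraging

variable {G H E : Type*} [Group G] [TopologicalSpace G] [ContinuousMul G] [CompactSpace G]
  [SecondCountableTopology G] [MeasurableSpace G] [BorelSpace G] [MeasurableSpace H]
  [NormedAddCommGroup E] [NormedSpace ℝ E] [CompleteSpace E]

theorem integral_eq_integral_integral_mul_left (μ : Measure G) [IsFiniteMeasure μ]
    [μ.IsMulLeftInvariant] (ν : Measure H) [IsProbabilityMeasure ν] {ι : H → G}
    (hι : Measurable ι) {F : G → E} (hF : Continuous F) :
    ∫ g, F g ∂μ = ∫ g, ∫ h, F (ι h * g) ∂ν ∂μ := by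
  obtain ⟨C, hC⟩ := isCompact_univ.exists_bound_of_continuousOn hF.continuousOn
  have hint : Integrable (Function.uncurry fun h g => F (ι h * g)) (ν.prod μ) :=
    (integrable_const C).mono'
      (hF.stronglyMeasurable.comp_measurable
        ((hι.comp measurable_fst).mul measurable_snd)).aestronglyMeasurable
      (.of_forall fun _ => hC _ trivial)
  rw [← integral_integral_swap hint]
  simp only [integral_mul_left_eq_self, integral_const, probReal_univ, one_smul]

end HaarAveraging

namespace Matrix

section OneBlockDiag

variable {R : Type*} {n : ℕ}

/-- The block-diagonal matrix `diag(1, V)`. -/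
def oneBlockDiag [Zero R] [One R] (V : Matrix (Fin n) (Fin n) R) :
    Matrix (Fin (n + 1)) (Fin (n + 1)) R :=
  of (Fin.cons (Fin.cons 1 0) fun i => Fin.cons 0 (V i))

section Entries

variable [Zero R] [One R] (V : Matrix (Fin n) (Fin n) R) (i j : Fin n)

@[simp] lemma oneBlockDiag_zero_zero : oneBlockDiag V 0 0 = 1 := rfl
@[simp] lemma oneBlockDiag_zero_succ : oneBlockDiag V 0 j.succ = 0 := rfl
@[simp] lemma oneBlockDiag_succ_zero : oneBlockDiag V i.succ 0 = 0 := rfl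
@[simp] lemma oneBlockDiag_succ_succ : oneBlockDiag V i.succ j.succ = V i j := rfl

end Entries

lemma oneBlockDiag_one [Zero R] [One R] : oneBlockDiag (1 : Matrix (Fin n) (Fin n) R) = 1 := by
  ext i j
  cases i using Fin.cases <;> cases j using Fin.cases <;>
    simp [one_apply, (Fin.succ_ne_zero _).symm]

lemma oneBlockDiag_mul [Semiring R] (V W : Matrix (Fin n) (Fin n) R) :
    oneBlockDiag V * oneBlockDiag W = oneBlockDiag (V * W) := by
  ext i j
  cases i using Fin.cases <;> cases j using Fin.cases <;> simp [mul_apply, Fin.sum_univ_succ]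

lemma oneBlockDiag_conjTranspose [Semiring R] [StarRing R] (V : Matrix (Fin n) (Fin n) R) :
    (oneBlockDiag V)ᴴ = oneBlockDiag Vᴴ := by
  ext i j
  cases i using Fin.cases <;> cases j using Fin.cases <;> simp

lemma oneBlockDiag_mul_mul_oneBlockDiag_zero_zero [Semiring R] (V W : Matrix (Fin n) (Fin n) R)
    (M : Matrix (Fin (n + 1)) (Fin (n + 1)) R) :
    (oneBlockDiag V * M * oneBlockDiag W) 0 0 = M 0 0 := by
  simp [mul_apply, Fin.sum_univ_succ]

lemma submatrix_succ_oneBlockDiag_mul_mul_oneBlockDiag [Semiring R]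
    (V W : Matrix (Fin n) (Fin n) R) (M : Matrix (Fin (n + 1)) (Fin (n + 1)) R) :
    (oneBlockDiag V * M * oneBlockDiag W).submatrix Fin.succ Fin.succ
      = V * M.submatrix Fin.succ Fin.succ * W := by
  ext i j
  simp [mul_apply, Fin.sum_univ_succ]

lemma continuous_oneBlockDiag [Zero R] [One R] [TopologicalSpace R] :
    Continuous (oneBlockDiag : Matrix (Fin n) (Fin n) R → _) :=
  continuous_matrix fun i j => by
    cases i using Fin.cases <;> cases j using Fin.cases <;>
      simp only [oneBlockDiag_zero_zero, oneBlockDiag_zero_succ, oneBlockDiag_succ_zero,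
        oneBlockDiag_succ_succ] <;> fun_prop

lemma trace_diagonal_mul_succ [NonUnitalNonAssocSemiring R] (d : Fin (n + 1) → R)
    (M : Matrix (Fin (n + 1)) (Fin (n + 1)) R) :
    trace (diagonal d * M)
      = d 0 * M 0 0 + trace (diagonal (fun i => d i.succ) * M.submatrix Fin.succ Fin.succ) := by
  rw [← trace_submatrix_succ]
  congr 2
  · simp [diagonal_mul]
  · ext i j
    simp [diagonal_mul]

lemma trace_diagonal_mul_oneBlockDiag_mul_conj [Semiring R] [StarRing R] (d : Fin (n + 1) → R)
    (V : Matrix (Fin n) (Fin n) R) (U B : Matrix (Fin (n + 1)) (Fin (n + 1)) R) :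
    trace (diagonal d * (oneBlockDiag V * U) * B * (oneBlockDiag V * U)ᴴ)
      = d 0 * (U * B * Uᴴ) 0 0
        + trace (diagonal (fun i => d i.succ) * V * (U * B * Uᴴ).submatrix Fin.succ Fin.succ
            * Vᴴ) := by
  have hconj : diagonal d * (oneBlockDiag V * U) * B * (oneBlockDiag V * U)ᴴ
      = diagonal d * (oneBlockDiag V * (U * B * Uᴴ) * oneBlockDiag Vᴴ) := by
    simp only [conjTranspose_mul, oneBlockDiag_conjTranspose, Matrix.mul_assoc]
  rw [hconj, trace_diagonal_mul_succ, oneBlockDiag_mul_mul_oneBlockDiag_zero_zero,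
    submatrix_succ_oneBlockDiag_mul_mul_oneBlockDiag]
  simp only [Matrix.mul_assoc]

variable [CommRing R] [StarRing R]

def unitaryGroup.oneBlockDiag : unitaryGroup (Fin n) R → unitaryGroup (Fin (n + 1)) R :=
  fun V => ⟨Matrix.oneBlockDiag V, by
    rw [mem_unitaryGroup_iff, star_eq_conjTranspose, oneBlockDiag_conjTranspose, oneBlockDiag_mul,
      ← star_eq_conjTranspose, mem_unitaryGroup_iff.mp V.2, oneBlockDiag_one]⟩

@[simp] lemma unitaryGroup.coe_oneBlockDiag (V : unitaryGroup (Fin n) R) :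
    (unitaryGroup.oneBlockDiag V : Matrix (Fin (n + 1)) (Fin (n + 1)) R) = Matrix.oneBlockDiag V :=
  rfl

lemma unitaryGroup.continuous_oneBlockDiag [TopologicalSpace R] :
    Continuous (unitaryGroup.oneBlockDiag : unitaryGroup (Fin n) R → _) :=
  (Matrix.continuous_oneBlockDiag.comp continuous_subtype_val).subtype_mk _

end OneBlockDiag

end Matrix

theorem IZ_one_step_general (N : ℕ) (hN : 0 < N)
    (μ : Measure (Matrix.unitaryGroup (Fin (N + 1)) ℂ))
    (ν : Measure (Matrix.unitaryGroup (Fin N) ℂ))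
    (hμ : IsHaarProb (N + 1) μ) (hν : IsHaarProb N ν)
    (a : Fin (N + 1) → ℝ)
    (B : Matrix (Fin (N + 1)) (Fin (N + 1)) ℂ) :
    IZ (N + 1) μ (Matrix.diagonal (fun i => (a i : ℂ))) B
      = ∫ U : Matrix.unitaryGroup (Fin (N + 1)) ℂ,
          Real.exp ((N + 1 : ℝ) * a 0 *
              (((U : Matrix (Fin (N + 1)) (Fin (N + 1)) ℂ) * B
                * star (U : Matrix (Fin (N + 1)) (Fin (N + 1)) ℂ)) 0 0).re) *
            IZ N ν
              (((N + 1 : ℂ) / (N : ℂ)) • Matrix.diagonal (fun i : Fin N => (a i.succ : ℂ)))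
              ((((U : Matrix (Fin (N + 1)) (Fin (N + 1)) ℂ) * B
                * star (U : Matrix (Fin (N + 1)) (Fin (N + 1)) ℂ)).submatrix
                  Fin.succ Fin.succ)) ∂μ := by
  have := hμ.1
  have := hν.1
  have : μ.IsMulLeftInvariant := ⟨hμ.2.1⟩
  unfold IZ
  rw [integral_eq_integral_integral_mul_left μ ν
    unitaryGroup.continuous_oneBlockDiag.measurable (by fun_prop)]
  congr 1 with U
  rw [← integral_const_mul]
  congr 1 with V
  simp only [Submonoid.coe_mul, unitaryGroup.coe_oneBlockDiag, star_eq_conjTranspose]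
  rw [trace_diagonal_mul_oneBlockDiag_mul_conj, Matrix.smul_mul, Matrix.smul_mul, Matrix.smul_mul,
    trace_smul, ← Real.exp_add]
  congr 1
  generalize trace (_ : Matrix (Fin N) (Fin N) ℂ) = T
  have hN' : (N : ℝ) ≠ 0 := by positivity
  have hscale : ((N + 1 : ℂ) / N) = (((N + 1) / N : ℝ) : ℂ) := by push_cast; rfl
  rw [smul_eq_mul, hscale, Complex.re_ofReal_mul, Complex.add_re, Complex.re_ofReal_mul]
  field_simp
  push_cast
  ring

/-- One step of the rank reduction: for `A = diag(a₁, A₋)` diagonal and `B` Hermitian of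
size `N+1`, writing `B̃ = U B U*` with `(1,1)`-entry `b̃₁₁` and lower-right block `B̃₋₋`,
`I_{N+1}(A,B) = ∫_{U(N+1)} exp((N+1)·a₁·b̃₁₁) · I_N((N+1)/N · A₋, B̃₋₋) dm(U)`. -/
theorem IZ_one_step (N : ℕ) (hN : 0 < N)
    (μ : Measure (Matrix.unitaryGroup (Fin (N + 1)) ℂ))
    (ν : Measure (Matrix.unitaryGroup (Fin N) ℂ))
    (hμ : IsHaarProb (N + 1) μ) (hν : IsHaarProb N ν)
    (a : Fin (N + 1) → ℝ)
    (B : Matrix (Fin (N + 1)) (Fin (N + 1)) ℂ) (hB : B.IsHermitian) :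
    IZ (N + 1) μ (Matrix.diagonal (fun i => (a i : ℂ))) B
      = ∫ U : Matrix.unitaryGroup (Fin (N + 1)) ℂ,
          Real.exp ((N + 1 : ℝ) * a 0 *
              (((U : Matrix (Fin (N + 1)) (Fin (N + 1)) ℂ) * B
                * star (U : Matrix (Fin (N + 1)) (Fin (N + 1)) ℂ)) 0 0).re) *
            IZ N ν
              (((N + 1 : ℂ) / (N : ℂ)) • Matrix.diagonal (fun i : Fin N => (a i.succ : ℂ)))
              ((((U : Matrix (Fin (N + 1)) (Fin (N + 1)) ℂ) * B
                * star (U : Matrix (Fin (N + 1)) (Fin (N + 1)) ℂ)).submatrix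
                  Fin.succ Fin.succ)) ∂μ :=
  IZ_one_step_general N hN μ ν hμ hν a B
end

section
/- Let b₁ ≥ … ≥ b_N be real numbers satisfying b_{i+1} + c/N ≥ b_i for some constant c > 0 (i.e., consecutive gaps are at most c/N). If the empirical measures N^{-1}∑δ_{b_i,N} converge weakly to a probability measure μ, then μ is supported on an interval and its absolutely continuous part has density bounded below by 1/c almost everywhere on its support. -/
open MeasureTheory Matrix
open scoped BigOperators

/-!
The gap condition turns weak convergence into a lower bound on the mass of intervals: if the
empirical measures eventually charge both `(-∞, x)` and `(y, ∞)`, the points between the last one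
above `y` and the first one below `x` all lie in `[x, y]`, and since consecutive points are at most
`c / N` apart there are at least `(y - x) N / c - 1` of them. By the portmanteau theorem this gives
`μ [x, y] ≥ (y - x) / c` whenever `μ` charges both sides of `[x, y]`. Applied to intervals
straddling two points of the support, this bounds the support, so it lies in `[l, u]` with `l` and
`u` in the support; applied to small balls inside `(l, u)`, it bounds the Radon–Nikodym derivative
of `μ` below by `1 / c` through the Besicovitch differentiation theorem.
-/

open Filter Set Topology
open scoped Finset ENNReal BoundedContinuousFunction

section Gaps

variable {n : ℕ} {b : Fin n → ℝ} {δ : ℝ}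

theorem sub_le_mul_of_succ_sub_le (hgap : ∀ i j : Fin n, j.val = i.val + 1 → b i - b j ≤ δ)
    {i j : Fin n} (hij : i ≤ j) : b i - b j ≤ ((j : ℝ) - i) * δ := by
  obtain ⟨d, hd⟩ := Nat.exists_eq_add_of_le (Fin.le_def.mp hij)
  induction d generalizing j with
  | zero => simp [Fin.ext (hd.trans i.val.add_zero)]
  | succ d ih =>
    let k : Fin n := ⟨i + d, by omega⟩
    have hik := ih (j := k) (Fin.le_def.mpr (by simp [k])) rfl
    have hkj := hgap k j (by simp [k, hd, add_assoc])
    have hj : (j : ℝ) = (k : ℝ) + 1 := by simp [k, hd, add_assoc]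
    rw [hj]
    linarith

theorem sub_le_card_mem_Icc_add_one_mul (hmono : Antitone b)
    (hgap : ∀ i j : Fin n, j.val = i.val + 1 → b i - b j ≤ δ) {x y : ℝ}
    (hxy : x ≤ y) (hx : ∃ i, b i < x) (hy : ∃ i, y < b i) :
    y - x ≤ (#{i | b i ∈ Icc x y} + 1) * δ := by
  have hK : ({i | y < b i} : Finset (Fin n)).Nonempty := by
    simpa [Finset.filter_nonempty_iff] using hy
  have hL : ({i | b i < x} : Finset (Fin n)).Nonempty := by
    simpa [Finset.filter_nonempty_iff] using hx
  set j := Finset.max' _ hK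
  set k := Finset.min' _ hL
  have hbj : y < b j := by simpa using Finset.max'_mem _ hK
  have hbk : b k < x := by simpa using Finset.min'_mem _ hL
  have hjk : j < k := by
    by_contra! h
    linarith [hmono h]
  have hIoo : Finset.Ioo j k ⊆ ({i | b i ∈ Icc x y} : Finset (Fin n)) := by
    intro i hi
    rw [Finset.mem_Ioo] at hi
    simp only [Finset.mem_filter, Finset.mem_univ, true_and, Set.mem_Icc]
    constructor
    · by_contra! h
      exact (Finset.min'_le _ i (by simpa using h)).not_gt hi.2
    · by_contra! h
      exact (Finset.le_max' _ i (by simpa using h)).not_gt hi.1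
  have hcard : (k : ℝ) ≤ #{i | b i ∈ Icc x y} + 1 + j := by
    have := Finset.card_le_card hIoo
    rw [Fin.card_Ioo] at this
    exact_mod_cast (by omega : (k : ℕ) ≤ #{i | b i ∈ Icc x y} + 1 + j)
  have hδ : 0 ≤ δ := by
    let j' : Fin n := ⟨j + 1, by omega⟩
    linarith [hgap j j' rfl, hmono (show j ≤ j' from Fin.le_def.mpr (by simp [j']))]
  calc y - x ≤ b j - b k := by linarith
    _ ≤ ((k : ℝ) - j) * δ := sub_le_mul_of_succ_sub_le hgap hjk.le
    _ ≤ (#{i | b i ∈ Icc x y} + 1) * δ := by gcongr; linarith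

end Gaps

section Empirical

variable {α : Type*} [MeasurableSpace α] {n : ℕ}

noncomputable def empiricalMeasure (x : Fin n → α) : Measure α :=
  (n : ℝ≥0∞)⁻¹ • ∑ i, Measure.dirac (x i)

variable (x : Fin n → α)

instance [NeZero n] : IsProbabilityMeasure (empiricalMeasure x) := by
  constructor
  simp [empiricalMeasure, ENNReal.inv_mul_cancel (NeZero.ne (n : ℝ≥0∞)) (ENNReal.natCast_ne_top n)]

theorem integral_empiricalMeasure [MeasurableSingletonClass α] (f : α → ℝ) :
    ∫ a, f a ∂empiricalMeasure x = (n : ℝ)⁻¹ * ∑ i, f (x i) := by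
  rw [empiricalMeasure, integral_smul_measure, integral_finsetSum_measure
    (fun i _ ↦ integrable_dirac (by simp))]
  simp

theorem exists_mem_of_empiricalMeasure_ne_zero [MeasurableSingletonClass α] {s : Set α}
    (h : empiricalMeasure x s ≠ 0) : ∃ i, x i ∈ s := by
  by_contra! hs
  simp [empiricalMeasure, Measure.dirac_apply, hs] at h

theorem empiricalMeasure_apply [MeasurableSingletonClass α] (s : Set α) [DecidablePred (· ∈ s)] :
    empiricalMeasure x s = #{i | x i ∈ s} / n := by
  simp [empiricalMeasure, Measure.dirac_apply, Set.indicator_apply, ENNReal.div_eq_inv_mul]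

noncomputable def empiricalProbabilityMeasure [NeZero n] : ProbabilityMeasure α :=
  ⟨empiricalMeasure x, inferInstance⟩

@[simp]
theorem coe_empiricalProbabilityMeasure [NeZero n] :
    (empiricalProbabilityMeasure x : Measure α) = empiricalMeasure x := rfl

theorem tendsto_empiricalProbabilityMeasure [TopologicalSpace α] [OpensMeasurableSpace α]
    [MeasurableSingletonClass α] {b : ∀ N : ℕ, Fin N → α} {μ : ProbabilityMeasure α}
    (h : ∀ f : α →ᵇ ℝ, Tendsto (fun N : ℕ ↦ (N : ℝ)⁻¹ * ∑ i, f (b N i)) atTop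
      (𝓝 (∫ a, f a ∂(μ : Measure α)))) :
    Tendsto (fun N ↦ empiricalProbabilityMeasure (b (N + 1))) atTop (𝓝 μ) := by
  rw [ProbabilityMeasure.tendsto_iff_forall_integral_tendsto]
  intro f
  simp only [coe_empiricalProbabilityMeasure, integral_empiricalMeasure]
  exact (h f).comp (tendsto_add_atTop_nat 1)

end Empirical

theorem MeasureTheory.ProbabilityMeasure.eventually_measure_ne_zero_of_tendsto {Ω ι : Type*}
    {L : Filter ι} [MeasurableSpace Ω] [TopologicalSpace Ω] [OpensMeasurableSpace Ω]
    [HasOuterApproxClosed Ω]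
    {μ : ProbabilityMeasure Ω} {μs : ι → ProbabilityMeasure Ω} (h : Tendsto μs L (𝓝 μ))
    {G : Set Ω} (hG : IsOpen G) (hμG : (μ : Measure Ω) G ≠ 0) :
    ∀ᶠ i in L, (μs i : Measure Ω) G ≠ 0 :=
  (eventually_lt_of_lt_liminf ((pos_iff_ne_zero.2 hμG).trans_le
    (ProbabilityMeasure.le_liminf_measure_open_of_tendsto h hG))).mono fun _ ↦ ne_of_gt

theorem ofReal_div_le_measure_Icc {c : ℝ} (hc : 0 < c) {b : ∀ N : ℕ, Fin N → ℝ}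
    (hmono : ∀ N, Antitone (b N))
    (hgap : ∀ N, ∀ i j : Fin N, j.val = i.val + 1 → b N i - b N j ≤ c / N)
    {μ : ProbabilityMeasure ℝ}
    (hconv : Tendsto (fun N ↦ empiricalProbabilityMeasure (b (N + 1))) atTop (𝓝 μ))
    {x y : ℝ} (hxy : x ≤ y) (hx : (μ : Measure ℝ) (Iio x) ≠ 0)
    (hy : (μ : Measure ℝ) (Ioi y) ≠ 0) :
    ENNReal.ofReal ((y - x) / c) ≤ (μ : Measure ℝ) (Icc x y) := by
  have hbelow : ∀ᶠ N in atTop, ∃ i, b (N + 1) i < x :=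
    (ProbabilityMeasure.eventually_measure_ne_zero_of_tendsto hconv isOpen_Iio hx).mono
      fun N hN ↦ exists_mem_of_empiricalMeasure_ne_zero _ hN
  have habove : ∀ᶠ N in atTop, ∃ i, y < b (N + 1) i :=
    (ProbabilityMeasure.eventually_measure_ne_zero_of_tendsto hconv isOpen_Ioi hy).mono
      fun N hN ↦ exists_mem_of_empiricalMeasure_ne_zero _ hN
  have hcount : ∀ᶠ N : ℕ in atTop, ENNReal.ofReal ((y - x) / c - 1 / (N + 1)) ≤
      empiricalMeasure (b (N + 1)) (Icc x y) := by
    filter_upwards [hbelow, habove] with N hl hh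
    have h := sub_le_card_mem_Icc_add_one_mul (hmono _) (hgap _) hxy hl hh
    have hN : (0 : ℝ) < N + 1 := by positivity
    rw [empiricalMeasure_apply, ← ENNReal.ofReal_natCast, ← ENNReal.ofReal_natCast,
      ← ENNReal.ofReal_div_of_pos (by exact_mod_cast hN)]
    refine ENNReal.ofReal_le_ofReal ?_
    push_cast at h ⊢
    rw [sub_le_iff_le_add, ← add_div, div_le_div_iff₀ hc hN]
    rwa [mul_div_assoc', le_div_iff₀ hN] at h
  have hlim : Tendsto (fun N : ℕ ↦ ENNReal.ofReal ((y - x) / c - 1 / (N + 1))) atTop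
      (𝓝 (ENNReal.ofReal ((y - x) / c))) := by
    refine (ENNReal.continuous_ofReal.tendsto _).comp ?_
    simpa using tendsto_one_div_add_atTop_nhds_zero_nat.const_sub ((y - x) / c)
  calc ENNReal.ofReal ((y - x) / c)
      = limsup (fun N : ℕ ↦ ENNReal.ofReal ((y - x) / c - 1 / (N + 1))) atTop :=
        hlim.limsup_eq.symm
    _ ≤ limsup (fun N ↦ empiricalMeasure (b (N + 1)) (Icc x y)) atTop :=
        limsup_le_limsup hcount
    _ ≤ (μ : Measure ℝ) (Icc x y) :=
        ProbabilityMeasure.limsup_measure_closed_le_of_tendsto hconv isClosed_Icc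

section IntervalMass

variable {μ : Measure ℝ} {c : ℝ}

theorem isBounded_support_of_ofReal_div_le_measure_Icc [IsProbabilityMeasure μ] (hc : 0 < c)
    (h : ∀ x y, x ≤ y → μ (Iio x) ≠ 0 → μ (Ioi y) ≠ 0 →
      ENNReal.ofReal ((y - x) / c) ≤ μ (Icc x y)) :
    Bornology.IsBounded μ.support := by
  have hpair : ∀ s ∈ μ.support, ∀ t ∈ μ.support, t - s ≤ c + 2 := by
    intro s hs t ht
    by_contra! hst
    have hIio := (Measure.mem_support_iff_forall s).1 hs _ (Iio_mem_nhds (lt_add_one s))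
    have hIoi := (Measure.mem_support_iff_forall t).1 ht _ (Ioi_mem_nhds (sub_one_lt t))
    have hmass := (h (s + 1) (t - 1) (by linarith) hIio.ne' hIoi.ne').trans prob_le_one
    rw [ENNReal.ofReal_le_one, div_le_one hc] at hmass
    linarith
  refine Metric.isBounded_iff.2 ⟨c + 2, fun s hs t ht ↦ ?_⟩
  rw [Real.dist_eq, abs_sub_le_iff]
  exact ⟨hpair t ht s hs, hpair s hs t ht⟩

theorem ofReal_inv_mul_volume_le_of_ofReal_div_le_measure_Icc [IsLocallyFiniteMeasure μ]
    (hc : 0 < c)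
    (h : ∀ x y, x ≤ y → μ (Iio x) ≠ 0 → μ (Ioi y) ≠ 0 →
      ENNReal.ofReal ((y - x) / c) ≤ μ (Icc x y))
    {l u : ℝ} (hl : l ∈ μ.support) (hu : u ∈ μ.support) {s : Set ℝ} (hs : s ⊆ Icc l u) :
    ENNReal.ofReal (1 / c) * volume s ≤ μ s := by
  have hball : ∀ z ∈ Ioo l u, ∀ᶠ r in 𝓝[>] 0,
      ENNReal.ofReal (1 / c) * volume (Metric.closedBall z r) ≤ μ (Metric.closedBall z r) := by
    rintro z ⟨hlz, hzu⟩
    filter_upwards [Ioo_mem_nhdsGT (lt_min (sub_pos.2 hlz) (sub_pos.2 hzu))] with r ⟨hr, hrlu⟩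
    have hIio := (Measure.mem_support_iff_forall l).1 hl _
      (Iio_mem_nhds (show l < z - r by linarith [min_le_left (z - l) (u - z)]))
    have hIoi := (Measure.mem_support_iff_forall u).1 hu _
      (Ioi_mem_nhds (show z + r < u by linarith [min_le_right (z - l) (u - z)]))
    rw [Real.volume_closedBall, Real.closedBall_eq_Icc, ← ENNReal.ofReal_mul (by positivity)]
    convert h _ _ (by linarith) hIio.ne' hIoi.ne' using 2
    ring
  have hsIoo : (s ∩ Ioo l u : Set ℝ) =ᵐ[volume] s := by
    conv_rhs => rw [← inter_eq_left.2 hs]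
    exact (ae_eq_refl s).inter (Ioo_ae_eq_Icc (μ := volume))
  calc ENNReal.ofReal (1 / c) * volume s = (ENNReal.ofReal (1 / c) • volume) (s ∩ Ioo l u) := by
        rw [Measure.smul_apply, measure_congr hsIoo, smul_eq_mul]
    _ ≤ μ (s ∩ Ioo l u) :=
        (Besicovitch.vitaliFamily volume).measure_le_of_frequently_le μ
          Measure.smul_absolutelyContinuous _ fun z hz ↦
            (Besicovitch.tendsto_filterAt volume z).frequently (hball z hz.2).frequently
    _ ≤ μ s := measure_mono inter_subset_left

end IntervalMass

/-- If the decreasing reals `b_{1,N} ≥ … ≥ b_{N,N}` have consecutive gaps at most `c/N`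
and their empirical measures converge weakly to a probability measure `μ`, then `μ` is
supported on an interval on which its density (w.r.t. Lebesgue) is at least `1/c` a.e.,
expressed as `(1/c)·vol(s) ≤ μ(s)` for measurable `s` inside the interval. -/
theorem limit_density_lower_bound (c : ℝ) (hc : 0 < c)
    (b : ∀ N : ℕ, Fin N → ℝ)
    (hmono : ∀ N, Antitone (b N))
    (hgap : ∀ N, ∀ i j : Fin N, j.val = i.val + 1 → b N i - b N j ≤ c / N)
    (μ : Measure ℝ) (hμ : IsProbabilityMeasure μ)
    (hconv : ∀ f : BoundedContinuousFunction ℝ ℝ,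
      Filter.Tendsto (fun N : ℕ => (N : ℝ)⁻¹ * ∑ i : Fin N, f (b N i))
        Filter.atTop (nhds (∫ x, f x ∂μ))) :
    ∃ l u : ℝ, l ≤ u ∧ μ (Set.Icc l u) = 1 ∧
      ∀ s : Set ℝ, MeasurableSet s → s ⊆ Set.Icc l u →
        ENNReal.ofReal (1 / c) * MeasureTheory.volume s ≤ μ s := by
  have hmass (x y : ℝ) (hxy : x ≤ y) (hx : μ (Iio x) ≠ 0) (hy : μ (Ioi y) ≠ 0) :
      ENNReal.ofReal ((y - x) / c) ≤ μ (Icc x y) :=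
    ofReal_div_le_measure_Icc (μ := ⟨μ, hμ⟩) hc hmono hgap
      (tendsto_empiricalProbabilityMeasure hconv) hxy hx hy
  have hS : IsCompact μ.support := Metric.isCompact_of_isClosed_isBounded
    Measure.isClosed_support (isBounded_support_of_ofReal_div_le_measure_Icc hc hmass)
  have hne : μ.support.Nonempty := Measure.nonempty_support (IsProbabilityMeasure.ne_zero μ)
  have hsub : μ.support ⊆ Icc (sInf μ.support) (sSup μ.support) := fun z hz ↦
    ⟨csInf_le hS.bddBelow hz, le_csSup hS.bddAbove hz⟩
  refine ⟨sInf μ.support, sSup μ.support, csInf_le_csSup hne hS.bddBelow hS.bddAbove, ?_,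
    fun s _ hs ↦ ofReal_inv_mul_volume_le_of_ofReal_div_le_measure_Icc hc hmass
      (hS.sInf_mem hne) (hS.sSup_mem hne) hs⟩
  rw [← prob_compl_eq_zero_iff measurableSet_Icc]
  exact measure_mono_null (compl_subset_compl.2 hsub) Measure.measure_compl_support
end

section
/- Let μ be a compactly supported probability measure on ℝ. The Hilbert transform H_μ(z) = ∫ 1/(z−λ) dμ(λ) is injective on the set {z ∈ ℂ : |z| > R} for R sufficiently large, so that it admits a compositional inverse near 0; writing this inverse as K_μ(w) = 1/w + R_μ(w), the function R_μ (the R-transform) is analytic in a neighborhood of 0. -/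
open MeasureTheory Matrix
open scoped BigOperators

/-!
Substituting `z = 1 / u` turns `H_μ` into `g u = ∫ u / (1 - u λ) dμ(λ)`, which is holomorphic
on `2 Λ |u| < 1` by differentiation under the integral sign, with `g 0 = 0` and `g' 0 = μ ℝ = 1`.
By the holomorphic inverse function theorem `g` is injective near `0`, so `H_μ` is injective
near `∞`, and `g` has a holomorphic local inverse `f` with `f 0 = 0`, `f' 0 = 1`. Then
`K_μ = 1 / f`, and `1 / f w - 1 / w` extends holomorphically across `0`: with `f w = w q(w)`,
`q = dslope f 0`, it is `dslope (1 / q) 0`.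
-/

open Filter Metric Set
open scoped Topology

section NormedField

variable {𝕜 : Type*} [NontriviallyNormedField 𝕜]

theorem half_le_norm_one_sub {c : 𝕜} (hc : ‖c‖ ≤ 1 / 2) : 1 / 2 ≤ ‖1 - c‖ := by
  have := norm_sub_norm_le (1 : 𝕜) c
  rw [norm_one] at this
  linarith

theorem one_sub_ne_zero_of_norm_le_half {c : 𝕜} (hc : ‖c‖ ≤ 1 / 2) : 1 - c ≠ 0 := by
  intro h
  have := half_le_norm_one_sub hc
  rw [h, norm_zero] at this
  linarith

theorem norm_inv_one_sub_le_two {c : 𝕜} (hc : ‖c‖ ≤ 1 / 2) : ‖(1 - c)⁻¹‖ ≤ 2 := by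
  rw [norm_inv, inv_le_comm₀ (by linarith [half_le_norm_one_sub hc]) two_pos]
  linarith [half_le_norm_one_sub hc]

theorem hasDerivAt_mul_inv_one_sub_mul {a u : 𝕜} (h : 1 - u * a ≠ 0) :
    HasDerivAt (fun v => v * (1 - v * a)⁻¹) ((1 - u * a)⁻¹ ^ 2) u := by
  have h₁ : HasDerivAt (fun v => 1 - v * a) (-a) u := by
    simpa using (hasDerivAt_mul_const a).const_sub 1
  refine ((hasDerivAt_id' u).fun_mul (h₁.fun_inv h)).congr_deriv ?_
  field_simp
  ring

end NormedField

/-- `H_μ (1 / u)`, in the form that extends holomorphically across `u = 0`. -/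
noncomputable def recipHilbert (μ : Measure ℝ) (u : ℂ) : ℂ :=
  ∫ lam : ℝ, u * (1 - u * (lam : ℂ))⁻¹ ∂μ

section RecipHilbert

variable {μ : Measure ℝ}

@[simp]
theorem recipHilbert_zero : recipHilbert μ 0 = 0 := by
  simp [recipHilbert]

theorem integral_inv_sub_ofReal_eq_recipHilbert_inv {z : ℂ} (hz : z ≠ 0) :
    ∫ lam : ℝ, (z - (lam : ℂ))⁻¹ ∂μ = recipHilbert μ z⁻¹ := by
  rw [recipHilbert]
  congr 1 with lam
  rw [← mul_inv, mul_sub, mul_one, mul_inv_cancel_left₀ hz]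

theorem norm_mul_ofReal_le_half {Λ lam : ℝ} {v : ℂ} (hv : 2 * Λ * ‖v‖ < 1) (hlam : |lam| ≤ Λ) :
    ‖v * (lam : ℂ)‖ ≤ 1 / 2 := by
  rw [norm_mul, Complex.norm_real, Real.norm_eq_abs]
  nlinarith [mul_le_mul_of_nonneg_left hlam (norm_nonneg v)]

theorem hasDerivAt_recipHilbert [IsFiniteMeasure μ] {Λ : ℝ} (hμ : ∀ᵐ lam ∂μ, |lam| ≤ Λ)
    {u : ℂ} (hu : 2 * Λ * ‖u‖ < 1) :
    HasDerivAt (recipHilbert μ) (∫ lam : ℝ, (1 - u * (lam : ℂ))⁻¹ ^ 2 ∂μ) u := by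
  set D : Set ℂ := {v | 2 * Λ * ‖v‖ < 1}
  have hD : D ∈ 𝓝 u := (isOpen_lt (by fun_prop) continuous_const).mem_nhds hu
  have hsmall : ∀ᵐ lam : ℝ ∂μ, ∀ v ∈ D, ‖v * (lam : ℂ)‖ ≤ 1 / 2 := by
    filter_upwards [hμ] with lam hlam v hv using norm_mul_ofReal_le_half hv hlam
  have hF_int : Integrable (fun lam : ℝ => u * (1 - u * (lam : ℂ))⁻¹) μ := by
    refine (integrable_const (‖u‖ * 2)).mono' (by fun_prop) ?_
    filter_upwards [hsmall] with lam hlam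
    rw [norm_mul]
    exact mul_le_mul_of_nonneg_left (norm_inv_one_sub_le_two (hlam u hu)) (norm_nonneg u)
  refine (hasDerivAt_integral_of_dominated_loc_of_deriv_le (bound := fun _ => (4 : ℝ))
    (F := fun v (lam : ℝ) => v * (1 - v * (lam : ℂ))⁻¹)
    (F' := fun v (lam : ℝ) => (1 - v * (lam : ℂ))⁻¹ ^ 2) hD
    (Eventually.of_forall fun v => by fun_prop) hF_int (by fun_prop) ?_
    (integrable_const 4) ?_).2
  · filter_upwards [hsmall] with lam hlam v hv
    rw [norm_pow]
    nlinarith [norm_inv_one_sub_le_two (hlam v hv), norm_nonneg (1 - v * (lam : ℂ))⁻¹]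
  · filter_upwards [hsmall] with lam hlam v hv
    exact hasDerivAt_mul_inv_one_sub_mul (one_sub_ne_zero_of_norm_le_half (hlam v hv))

theorem analyticAt_recipHilbert_zero [IsFiniteMeasure μ] {Λ : ℝ} (hμ : ∀ᵐ lam ∂μ, |lam| ≤ Λ) :
    AnalyticAt ℂ (recipHilbert μ) 0 := by
  exact DifferentiableOn.analyticAt (s := {v | 2 * Λ * ‖v‖ < 1})
    (fun v hv => (hasDerivAt_recipHilbert hμ hv).differentiableAt.differentiableWithinAt)
    ((isOpen_lt (by fun_prop) continuous_const).mem_nhds (by simp))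

theorem deriv_recipHilbert_zero [IsProbabilityMeasure μ] {Λ : ℝ} (hμ : ∀ᵐ lam ∂μ, |lam| ≤ Λ) :
    deriv (recipHilbert μ) 0 = 1 := by
  simpa using (hasDerivAt_recipHilbert hμ (u := 0) (by simp)).deriv

end RecipHilbert

section LocalInverse

variable {𝕜 : Type*} [NontriviallyNormedField 𝕜]

theorem exists_injOn_comp_inv_of_mem_nhds_zero {β : Type*} {g : 𝕜 → β} {U : Set 𝕜}
    (hU : U ∈ 𝓝 0) (hg : InjOn g U) : ∃ R > 0, InjOn (fun z => g z⁻¹) {z | R < ‖z‖} := by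
  obtain ⟨r, hr, hrU⟩ := Metric.mem_nhds_iff.1 hU
  have hinv : ∀ z ∈ {z : 𝕜 | r⁻¹ < ‖z‖}, z⁻¹ ∈ U := fun z hz =>
    hrU (by rw [mem_ball_zero_iff, norm_inv]; exact inv_lt_of_inv_lt₀ hr hz)
  exact ⟨r⁻¹, inv_pos.2 hr, fun z hz w hw h => inv_injective (hg (hinv z hz) (hinv w hw) h)⟩

theorem AnalyticAt.exists_localInverse [CompleteSpace 𝕜] [CharZero 𝕜] {g : 𝕜 → 𝕜} {a : 𝕜}
    (hg : AnalyticAt 𝕜 g a) (hg' : deriv g a ≠ 0) :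
    ∃ f : 𝕜 → 𝕜, AnalyticAt 𝕜 f (g a) ∧ f (g a) = a ∧ deriv f (g a) = (deriv g a)⁻¹ ∧
      (∀ᶠ x in 𝓝 a, f (g x) = x) ∧ ∀ᶠ w in 𝓝 (g a), g (f w) = w :=
  ⟨_, hg.analyticAt_localInverse hg', HasStrictFDerivAt.localInverse_apply_image ..,
    (hg.hasStrictDerivAt.to_localInverse hg').hasDerivAt.deriv,
    hg.hasStrictDerivAt.eventually_left_inverse hg',
    hg.hasStrictDerivAt.eventually_right_inverse hg'⟩

noncomputable def invRegularPart (f : 𝕜 → 𝕜) : 𝕜 → 𝕜 :=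
  dslope (fun w => (dslope f 0 w)⁻¹) 0

theorem inv_add_invRegularPart {f : 𝕜 → 𝕜} (hf0 : f 0 = 0) (hf' : deriv f 0 = 1) {w : 𝕜}
    (hw : w ≠ 0) : w⁻¹ + invRegularPart f w = (f w)⁻¹ := by
  have hq : dslope f 0 w = f w / w := by
    rw [dslope_of_ne _ hw, slope_def_field, hf0, sub_zero, sub_zero]
  rw [invRegularPart, dslope_of_ne _ hw, slope_def_field, dslope_same, hf', hq, inv_one,
    sub_zero, inv_div, sub_div, div_div_cancel_left' hw, one_div]
  ring

theorem AnalyticAt.eventually_analyticAt_invRegularPart {f : ℂ → ℂ} (hf : AnalyticAt ℂ f 0)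
    (hf' : deriv f 0 ≠ 0) : ∀ᶠ w in 𝓝 0, AnalyticAt ℂ (invRegularPart f) w := by
  obtain ⟨r, hr, hfr⟩ := Metric.eventually_nhds_iff_ball.1 hf.eventually_analyticAt
  have hq : DifferentiableOn ℂ (dslope f 0) (ball 0 r) :=
    (Complex.differentiableOn_dslope (ball_mem_nhds 0 hr)).2
      fun w hw => (hfr w hw).differentiableAt.differentiableWithinAt
  have hq0 : ∀ᶠ w in 𝓝 0, dslope f 0 w ≠ 0 :=
    (hq.continuousOn.continuousAt (ball_mem_nhds 0 hr)).eventually_ne (by rwa [dslope_same])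
  obtain ⟨ρ, hρ, hρq⟩ := Metric.eventually_nhds_iff_ball.1 (hq0.and (ball_mem_nhds 0 hr))
  have hqinv : DifferentiableOn ℂ (fun w => (dslope f 0 w)⁻¹) (ball 0 ρ) :=
    (hq.mono fun w hw => (hρq w hw).2).inv fun w hw => (hρq w hw).1
  have hR := (Complex.differentiableOn_dslope (ball_mem_nhds 0 hρ)).2 hqinv
  exact eventually_of_mem (ball_mem_nhds 0 hρ)
    fun w hw => hR.analyticAt (isOpen_ball.mem_nhds hw)

end LocalInverse

/-- The Hilbert transform `H_μ(z) = ∫ (z-λ)⁻¹ dμ(λ)` of a compactly supported probability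
measure on `ℝ` is injective outside a large enough disc; its compositional inverse near
`0` has the form `K_μ(w) = 1/w + R_μ(w)` with `R_μ` (the `R`-transform) analytic in a
neighbourhood of `0`. -/
theorem R_transform_exists (μ : Measure ℝ) (hμ : IsProbabilityMeasure μ)
    (Λ : ℝ) (hsupp : μ (Set.Icc (-Λ) Λ)ᶜ = 0) :
    ∃ R : ℝ, 0 < R ∧
      Set.InjOn (fun z : ℂ => ∫ lam : ℝ, (z - (lam : ℂ))⁻¹ ∂μ) {z : ℂ | R < ‖z‖} ∧
      ∃ (Rtr : ℂ → ℂ) (ε : ℝ), 0 < ε ∧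
        AnalyticOnNhd ℂ Rtr (Metric.ball (0 : ℂ) ε) ∧
        ∀ w ∈ Metric.ball (0 : ℂ) ε, w ≠ 0 →
          ∫ lam : ℝ, ((1 / w + Rtr w) - (lam : ℂ))⁻¹ ∂μ = w := by
  have hbdd : ∀ᵐ lam ∂μ, |lam| ≤ Λ := by
    filter_upwards [mem_ae_iff.2 hsupp] with lam hlam using abs_le.2 hlam
  have hg := analyticAt_recipHilbert_zero hbdd
  obtain ⟨f, hf, hf0, hf', hleft, hright⟩ :=
    hg.exists_localInverse (by rw [deriv_recipHilbert_zero hbdd]; exact one_ne_zero)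
  simp only [recipHilbert_zero, deriv_recipHilbert_zero hbdd, inv_one] at hf hf0 hf' hright
  obtain ⟨R, hR, hinj⟩ :=
    exists_injOn_comp_inv_of_mem_nhds_zero hleft (LeftInvOn.injOn fun _ hx => hx)
  obtain ⟨ε, hε, hball⟩ := Metric.eventually_nhds_iff_ball.1
    ((hf.eventually_analyticAt_invRegularPart (by rw [hf']; exact one_ne_zero)).and hright)
  refine ⟨R, hR, hinj.congr fun z hz => ?_, invRegularPart f, ε, hε,
    fun w hw => (hball w hw).1, fun w hw hw0 => ?_⟩
  · exact (integral_inv_sub_ofReal_eq_recipHilbert_inv (norm_pos_iff.1 (hR.trans hz))).symm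
  · have hfw : f w ≠ 0 := fun h => hw0 (by simpa [h] using (hball w hw).2.symm)
    rw [one_div, inv_add_invRegularPart hf0 hf' hw0,
      integral_inv_sub_ofReal_eq_recipHilbert_inv (inv_ne_zero hfw), inv_inv, (hball w hw).2]
end

section
/- For t in the interval [H_min, H_max], the function f^{(2)}_μ(t) = t·R_μ(t) − ∫ log(1 + t·R_μ(t) − t·λ) dμ(λ) equals the integral ∫₀^t R_μ(s) ds. -/
/-!
For `t ≠ 0` put `z(t) = 1/t + R(t)`, so that `H_μ(z(t)) = t` and
`1 + t R(t) - t λ = t (z(t) - λ)`. For `0 < t < H_max` the point `z(t)` lies to the right of the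
support: it tends to `+∞` as `t ↓ 0` and can never equal `λ_max`, because `H_μ(λ_max) ≥ H_max`.
There `f(t) = t z(t) - 1 - log t - ∫ log (z(t) - λ) dμ`, and since `z' = 1 / H_μ'(z)` and
`d/dz ∫ log (z - λ) dμ = H_μ(z) = t`, the terms in `z'` cancel: `f'(t) = z(t) - 1/t = R(t)`.
Finiteness of `H_max` gives `∫ (λ_max - λ)⁻¹ dμ < ∞`, which dominates `log (1 + t R(t) - t λ)`
and makes `f` continuous on `[0, H_max]`; the fundamental theorem of calculus concludes.
Negative `t` are reduced to positive ones by reflecting `μ` through `λ ↦ -λ`.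
-/

open MeasureTheory Matrix
open scoped BigOperators

open Filter Set Topology

noncomputable def cauchyTransform (μ : Measure ℝ) (z : ℝ) : ℝ := ∫ x, (z - x)⁻¹ ∂μ

noncomputable def logPotential (μ : Measure ℝ) (z : ℝ) : ℝ := ∫ x, Real.log (z - x) ∂μ

/-- The function `f^{(2)}_μ` of the paper, with `R` in the role of the R-transform. -/
noncomputable def fBetaTwo (μ : Measure ℝ) (R : ℝ → ℝ) (t : ℝ) : ℝ :=
  t * R t - ∫ x, Real.log (1 + t * R t - t * x) ∂μ

theorem IsPreconnected.forall_lt_of_forall_ne {X α : Type*} [TopologicalSpace X] [LinearOrder α]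
    [TopologicalSpace α] [OrderClosedTopology α] {s : Set X} (hs : IsPreconnected s) {f : X → α}
    (hf : ContinuousOn f s) {c : α} (hne : ∀ x ∈ s, f x ≠ c) {x₀ : X} (hx₀ : x₀ ∈ s)
    (hc : c < f x₀) : ∀ x ∈ s, c < f x := by
  intro x hx
  refine lt_of_not_ge fun hle => ?_
  obtain ⟨y, hy, hyc⟩ := hs.intermediate_value hx hx₀ hf ⟨hle, hc.le⟩
  exact hne y hy hyc

theorem Real.abs_log_le_inv_add_self {x : ℝ} (hx : 0 ≤ x) : |Real.log x| ≤ x⁻¹ + x :=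
  abs_le.2 ⟨by linarith [Real.neg_inv_le_log hx],
    by linarith [Real.log_le_self hx, inv_nonneg.2 hx]⟩

theorem integral_measure_neg {G E : Type*} [MeasurableSpace G] [InvolutiveNeg G]
    [MeasurableNeg G] [NormedAddCommGroup E] [NormedSpace ℝ E] (ν : Measure G) (f : G → E) :
    ∫ x, f x ∂ν.neg = ∫ x, f (-x) ∂ν :=
  integral_map_equiv (MeasurableEquiv.neg G) f

instance Measure.neg.instIsProbabilityMeasure {G : Type*} [MeasurableSpace G] [Neg G]
    [MeasurableNeg G] (ν : Measure G) [IsProbabilityMeasure ν] : IsProbabilityMeasure ν.neg :=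
  Measure.isProbabilityMeasure_map measurable_neg.aemeasurable

section CauchyTransform

variable {μ : Measure ℝ} {a b : ℝ}

theorem integrable_of_ae_mem_Icc [IsFiniteMeasure μ] (hμ : ∀ᵐ x ∂μ, x ∈ Icc a b) {f : ℝ → ℝ}
    (hf : ContinuousOn f (Icc a b)) : Integrable f μ := by
  rw [← Measure.restrict_eq_self_of_ae_mem hμ]
  exact hf.integrableOn_compact isCompact_Icc

theorem integrable_inv_sub [IsFiniteMeasure μ] (hμ : ∀ᵐ x ∂μ, x ∈ Icc a b) {z : ℝ}
    (hz : b < z) : Integrable (fun x => (z - x)⁻¹) μ :=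
  integrable_of_ae_mem_Icc hμ <|
    (continuousOn_const.sub continuousOn_id).inv₀ fun _ hx => (sub_pos.2 (hx.2.trans_lt hz)).ne'

theorem integrable_log_sub [IsFiniteMeasure μ] (hμ : ∀ᵐ x ∂μ, x ∈ Icc a b) {z : ℝ}
    (hz : b < z) : Integrable (fun x => Real.log (z - x)) μ :=
  integrable_of_ae_mem_Icc hμ <|
    (continuousOn_const.sub continuousOn_id).log fun _ hx => (sub_pos.2 (hx.2.trans_lt hz)).ne'

theorem integral_log_mul_sub [IsProbabilityMeasure μ] (hμ : ∀ᵐ x ∂μ, x ∈ Icc a b) {t w : ℝ}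
    (ht : t ≠ 0) (hw : b < w) :
    ∫ x, Real.log (t * (w - x)) ∂μ = Real.log t + logPotential μ w := by
  have hsplit : ∀ᵐ x ∂μ, Real.log (t * (w - x)) = Real.log t + Real.log (w - x) := by
    filter_upwards [hμ] with x hx
    exact Real.log_mul ht (sub_pos.2 (hx.2.trans_lt hw)).ne'
  rw [integral_congr_ae hsplit, integral_add (integrable_const _) (integrable_log_sub hμ hw),
    integral_const, probReal_univ, one_smul, logPotential]

/-- In `ℝ≥0∞` the integrand is `∞` at `x = b`, so this bound also rules out an atom at `b`. -/
theorem lintegral_inv_ofReal_sub_le_of_tendsto [IsFiniteMeasure μ]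
    (hμ : ∀ᵐ x ∂μ, x ∈ Icc a b) {H : ℝ} (hH : Tendsto (cauchyTransform μ) (𝓝[>] b) (𝓝 H)) :
    ∫⁻ x, (ENNReal.ofReal (b - x))⁻¹ ∂μ ≤ ENNReal.ofReal H := by
  have hpt : ∀ x, Tendsto (fun z => (ENNReal.ofReal (z - x))⁻¹) (𝓝[>] b)
      (𝓝 (ENNReal.ofReal (b - x))⁻¹) := fun x =>
    (continuous_inv.tendsto _).comp <| (ENNReal.continuous_ofReal.tendsto _).comp <|
      ((continuous_id.sub continuous_const).tendsto b).mono_left nhdsWithin_le_nhds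
  have hint : ∀ᶠ z in 𝓝[>] b,
      ∫⁻ x, (ENNReal.ofReal (z - x))⁻¹ ∂μ = ENNReal.ofReal (cauchyTransform μ z) := by
    filter_upwards [self_mem_nhdsWithin] with z hz
    rw [cauchyTransform, ofReal_integral_eq_lintegral_ofReal (integrable_inv_sub hμ hz)]
    · refine lintegral_congr_ae ?_
      filter_upwards [hμ] with x hx
      rw [ENNReal.ofReal_inv_of_pos (by linarith [hx.2, mem_Ioi.1 hz])]
    · filter_upwards [hμ] with x hx
      exact inv_nonneg.2 (by linarith [hx.2, mem_Ioi.1 hz])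
  calc ∫⁻ x, (ENNReal.ofReal (b - x))⁻¹ ∂μ
      = ∫⁻ x, liminf (fun z => (ENNReal.ofReal (z - x))⁻¹) (𝓝[>] b) ∂μ := by
        simp_rw [fun x => (hpt x).liminf_eq]
    _ ≤ liminf (fun z => ∫⁻ x, (ENNReal.ofReal (z - x))⁻¹ ∂μ) (𝓝[>] b) :=
        lintegral_liminf_le' fun z => by fun_prop
    _ = ENNReal.ofReal H := by
        rw [liminf_congr hint]
        exact ((ENNReal.continuous_ofReal.tendsto H).comp hH).liminf_eq

theorem ae_lt_of_tendsto_cauchyTransform [IsFiniteMeasure μ] (hμ : ∀ᵐ x ∂μ, x ∈ Icc a b)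
    {H : ℝ} (hH : Tendsto (cauchyTransform μ) (𝓝[>] b) (𝓝 H)) : ∀ᵐ x ∂μ, x < b := by
  have hfin := (lintegral_inv_ofReal_sub_le_of_tendsto hμ hH).trans_lt ENNReal.ofReal_lt_top
  filter_upwards [hμ, ae_lt_top (by fun_prop) hfin.ne] with x hx hlt
  refine hx.2.lt_of_ne ?_
  rintro rfl
  simp at hlt

theorem integrable_inv_sub_of_tendsto [IsFiniteMeasure μ] (hμ : ∀ᵐ x ∂μ, x ∈ Icc a b) {H : ℝ}
    (hH : Tendsto (cauchyTransform μ) (𝓝[>] b) (𝓝 H)) : Integrable (fun x => (b - x)⁻¹) μ := by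
  refine ⟨by fun_prop, ?_⟩
  calc ∫⁻ x, ‖(b - x)⁻¹‖ₑ ∂μ = ∫⁻ x, (ENNReal.ofReal (b - x))⁻¹ ∂μ := by
        refine lintegral_congr_ae ?_
        filter_upwards [ae_lt_of_tendsto_cauchyTransform hμ hH] with x hx
        rw [Real.enorm_eq_ofReal (inv_nonneg.2 (sub_pos.2 hx).le),
          ENNReal.ofReal_inv_of_pos (sub_pos.2 hx)]
    _ ≤ ENNReal.ofReal H := lintegral_inv_ofReal_sub_le_of_tendsto hμ hH
    _ < ⊤ := ENNReal.ofReal_lt_top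

theorem le_cauchyTransform_of_tendsto [IsFiniteMeasure μ] (hμ : ∀ᵐ x ∂μ, x ∈ Icc a b) {H : ℝ}
    (hH : Tendsto (cauchyTransform μ) (𝓝[>] b) (𝓝 H)) : H ≤ cauchyTransform μ b := by
  refine le_of_tendsto hH ?_
  filter_upwards [self_mem_nhdsWithin] with z hz
  refine integral_mono_ae (integrable_inv_sub hμ hz) (integrable_inv_sub_of_tendsto hμ hH) ?_
  filter_upwards [ae_lt_of_tendsto_cauchyTransform hμ hH] with x hx
  exact inv_anti₀ (sub_pos.2 hx) (by linarith [mem_Ioi.1 hz])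

theorem hasDerivAt_cauchyTransform [IsFiniteMeasure μ] (hμ : ∀ᵐ x ∂μ, x ∈ Icc a b) {z : ℝ}
    (hz : b < z) : HasDerivAt (cauchyTransform μ) (-∫ x, ((z - x) ^ 2)⁻¹ ∂μ) z := by
  obtain ⟨c, hbc, hcz⟩ := exists_between hz
  have hsep : ∀ᵐ x ∂μ, ∀ y ∈ Ioi c, c - b ≤ y - x := by
    filter_upwards [hμ] with x hx y hy
    linarith [hx.2, mem_Ioi.1 hy]
  rw [← integral_neg]
  refine (hasDerivAt_integral_of_dominated_loc_of_deriv_le (μ := μ)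
    (F := fun y x => (y - x)⁻¹) (F' := fun y x => -((y - x) ^ 2)⁻¹)
    (bound := fun _ => ((c - b) ^ 2)⁻¹) (Ioi_mem_nhds hcz)
    (Eventually.of_forall fun y => by fun_prop) (integrable_inv_sub hμ hz)
    (by fun_prop) ?_ (integrable_const _) ?_).2
  · filter_upwards [hsep] with x hx y hy
    rw [norm_neg, norm_inv, norm_pow, Real.norm_eq_abs, sq_abs]
    exact inv_anti₀ (by nlinarith) (pow_le_pow_left₀ (by linarith) (hx y hy) 2)
  · filter_upwards [hsep] with x hx y hy
    have hderiv := (hasDerivAt_inv (by linarith [hx y hy] : y - x ≠ 0)).comp y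
      ((hasDerivAt_id' y).sub_const x)
    rwa [mul_one] at hderiv

theorem hasDerivAt_logPotential [IsFiniteMeasure μ] (hμ : ∀ᵐ x ∂μ, x ∈ Icc a b) {z : ℝ}
    (hz : b < z) : HasDerivAt (logPotential μ) (cauchyTransform μ z) z := by
  obtain ⟨c, hbc, hcz⟩ := exists_between hz
  have hsep : ∀ᵐ x ∂μ, ∀ y ∈ Ioi c, c - b ≤ y - x := by
    filter_upwards [hμ] with x hx y hy
    linarith [hx.2, mem_Ioi.1 hy]
  refine (hasDerivAt_integral_of_dominated_loc_of_deriv_le (μ := μ)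
    (F := fun y x => Real.log (y - x)) (F' := fun y x => (y - x)⁻¹)
    (bound := fun _ => (c - b)⁻¹) (Ioi_mem_nhds hcz)
    (Eventually.of_forall fun y =>
      (by fun_prop : Measurable fun x => Real.log (y - x)).aestronglyMeasurable)
    (integrable_log_sub hμ hz) (by fun_prop) ?_ (integrable_const _) ?_).2
  · filter_upwards [hsep] with x hx y hy
    rw [norm_inv, Real.norm_eq_abs, abs_of_pos (by linarith [hx y hy])]
    exact inv_anti₀ (by linarith) (hx y hy)
  · filter_upwards [hsep] with x hx y hy
    simpa using ((hasDerivAt_id y).sub_const x).log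
      (by simp only [id]; linarith [hx y hy, mem_Ioi.1 hy])

theorem integral_inv_sq_sub_pos [IsFiniteMeasure μ] [NeZero μ] (hμ : ∀ᵐ x ∂μ, x ∈ Icc a b)
    {z : ℝ} (hz : b < z) : 0 < ∫ x, ((z - x) ^ 2)⁻¹ ∂μ := by
  have hint : Integrable (fun x => ((z - x) ^ 2)⁻¹) μ := integrable_of_ae_mem_Icc hμ <|
    ((continuousOn_const.sub continuousOn_id).pow 2).inv₀ fun _ hx =>
      pow_ne_zero 2 (sub_pos.2 (hx.2.trans_lt hz)).ne'
  rw [integral_pos_iff_support_of_nonneg (fun x => by positivity) hint, pos_iff_ne_zero]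
  intro h0
  have hfalse : ∀ᵐ x ∂μ, False := by
    filter_upwards [hμ, measure_eq_zero_iff_ae_notMem.1 h0] with x hx hx0
    exact hx0 (by simpa [Function.mem_support, sub_eq_zero] using (hx.2.trans_lt hz).ne')
  exact NeZero.ne μ (ae_eq_bot.1 (eventually_false_iff_eq_bot.1 hfalse))

theorem cauchyTransform_neg (μ : Measure ℝ) (z : ℝ) :
    cauchyTransform μ.neg z = -cauchyTransform μ (-z) := by
  rw [cauchyTransform, cauchyTransform, integral_measure_neg, ← integral_neg]
  congr 1 with x
  rw [← inv_neg, neg_sub, sub_neg_eq_add, sub_neg_eq_add, add_comm]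

theorem ae_mem_Icc_neg (hμ : ∀ᵐ x ∂μ, x ∈ Icc a b) : ∀ᵐ x ∂μ.neg, x ∈ Icc (-b) (-a) := by
  refine (MeasurableEquiv.neg ℝ).measurableEmbedding.ae_map_iff.2 ?_
  filter_upwards [hμ] with x hx using ⟨neg_le_neg hx.2, neg_le_neg hx.1⟩

theorem tendsto_cauchyTransform_neg {H : ℝ}
    (hH : Tendsto (cauchyTransform μ) (𝓝[<] a) (𝓝 H)) :
    Tendsto (cauchyTransform μ.neg) (𝓝[>] (-a)) (𝓝 (-H)) := by
  have hneg : Tendsto Neg.neg (𝓝[>] (-a)) (𝓝[<] a) := by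
    have := (continuous_neg (G := ℝ)).continuousWithinAt.tendsto_nhdsWithin (x := -a)
      (s := Ioi (-a)) (t := Iio a) fun z hz => show -z < a from neg_lt.1 hz
    rwa [neg_neg] at this
  exact (hH.comp hneg).neg.congr fun z => (cauchyTransform_neg μ z).symm

end CauchyTransform

theorem fBetaTwo_neg (μ : Measure ℝ) (R : ℝ → ℝ) (t : ℝ) :
    fBetaTwo μ.neg (fun s => -R (-s)) t = fBetaTwo μ R (-t) := by
  simp only [fBetaTwo, integral_measure_neg]
  ring_nf

section PositiveBranch

variable {μ : Measure ℝ} [IsProbabilityMeasure μ] {a b H : ℝ} {R : ℝ → ℝ}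

theorem continuousOn_inv_add (hRc : ContinuousOn R (Icc 0 H)) :
    ContinuousOn (fun t => t⁻¹ + R t) (Ioc 0 H) :=
  (continuousOn_inv₀.mono fun _ ht => ht.1.ne').add (hRc.mono Ioc_subset_Icc_self)

theorem lt_inv_add_of_mem_Ioo (hμ : ∀ᵐ x ∂μ, x ∈ Icc a b)
    (hH : Tendsto (cauchyTransform μ) (𝓝[>] b) (𝓝 H)) (hRc : ContinuousOn R (Icc 0 H))
    (hR : ∀ t ∈ Ioc 0 H, cauchyTransform μ (t⁻¹ + R t) = t) {t : ℝ} (ht : t ∈ Ioo 0 H) :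
    b < t⁻¹ + R t := by
  have hH0 : 0 < H := ht.1.trans ht.2
  have hne : ∀ s ∈ Ioo 0 H, s⁻¹ + R s ≠ b := fun s hs heq => by
    have hle := le_cauchyTransform_of_tendsto hμ hH
    rw [← heq, hR s (Ioo_subset_Ioc_self hs)] at hle
    exact hs.2.not_ge hle
  have hR0 : Tendsto R (𝓝[>] 0) (𝓝 (R 0)) :=
    (hRc 0 ⟨le_rfl, hH0.le⟩).mono_of_mem_nhdsWithin
      (mem_of_superset (Ioo_mem_nhdsGT hH0) Ioo_subset_Icc_self)
  obtain ⟨t₀, hbt₀, ht₀⟩ :=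
    (((tendsto_inv_nhdsGT_zero.atTop_add hR0).eventually_gt_atTop b).and
      (Ioo_mem_nhdsGT hH0)).exists
  exact isPreconnected_Ioo.forall_lt_of_forall_ne
    ((continuousOn_inv_add hRc).mono Ioo_subset_Ioc_self) hne ht₀ hbt₀ t ht

theorem le_inv_add_of_mem_Ioc (hμ : ∀ᵐ x ∂μ, x ∈ Icc a b)
    (hH : Tendsto (cauchyTransform μ) (𝓝[>] b) (𝓝 H)) (hRc : ContinuousOn R (Icc 0 H))
    (hR : ∀ t ∈ Ioc 0 H, cauchyTransform μ (t⁻¹ + R t) = t) {t : ℝ} (ht : t ∈ Ioc 0 H) :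
    b ≤ t⁻¹ + R t := by
  have hcl : t ∈ closure (Ioo 0 H) := by
    rw [closure_Ioo (ht.1.trans_le ht.2).ne]
    exact Ioc_subset_Icc_self ht
  exact ContinuousWithinAt.closure_le hcl continuousWithinAt_const
    ((continuousOn_inv_add hRc t ht).mono Ioo_subset_Ioc_self)
    fun s hs => (lt_inv_add_of_mem_Ioo hμ hH hRc hR hs).le

theorem abs_log_one_add_mul_sub_mul_le (hμ : ∀ᵐ x ∂μ, x ∈ Icc a b)
    (hH : Tendsto (cauchyTransform μ) (𝓝[>] b) (𝓝 H)) (hRc : ContinuousOn R (Icc 0 H))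
    (hR : ∀ t ∈ Ioc 0 H, cauchyTransform μ (t⁻¹ + R t) = t) {C : ℝ}
    (hC : ∀ t ∈ Icc 0 H, ∀ x ∈ Icc a b, |R t - x| ≤ C) {t x : ℝ} (ht : t ∈ Icc 0 H)
    (hx : x ∈ Icc a b) (hxb : x < b) :
    0 < 1 + t * R t - t * x ∧
      |Real.log (1 + t * R t - t * x)| ≤ 2 + H * C + C * (b - x)⁻¹ := by
  set c := 1 + t * R t - t * x
  set d := b - x
  have hd : 0 < d := sub_pos.2 hxb
  have hC0 : 0 ≤ C := (abs_nonneg _).trans (hC t ht x hx)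
  have hsmall : |t * (R t - x)| ≤ t * C := by
    rw [abs_mul, abs_of_nonneg ht.1]
    exact mul_le_mul_of_nonneg_left (hC t ht x hx) ht.1
  have hc_eq : c = 1 + t * (R t - x) := by ring
  have hlow₁ : 1 - t * C ≤ c := by linarith [neg_abs_le (t * (R t - x))]
  have hup : c ≤ 1 + H * C := by
    linarith [le_abs_self (t * (R t - x)), mul_le_mul_of_nonneg_right ht.2 hC0]
  have hlow₂ : t * d ≤ c := by
    rcases ht.1.eq_or_lt with rfl | ht0
    · simp [c]
    · have hz := le_inv_add_of_mem_Ioc hμ hH hRc hR ⟨ht0, ht.2⟩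
      have hfac : c = t * (t⁻¹ + R t - x) := by field_simp; ring
      rw [hfac]
      exact mul_le_mul_of_nonneg_left (by linarith) ht0.le
  -- weighting the two lower bounds by `C` and `d` eliminates `t`
  have hkey : d ≤ (C + d) * c := by
    nlinarith [mul_le_mul_of_nonneg_left hlow₂ hC0, mul_le_mul_of_nonneg_left hlow₁ hd.le]
  have hc : 0 < c := (mul_pos_iff_of_pos_left (by positivity)).1 (hd.trans_le hkey)
  have hinv : c⁻¹ ≤ 1 + C * d⁻¹ := by
    have hrw : 1 + C * d⁻¹ = (d / (C + d))⁻¹ := by field_simp; ring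
    rw [hrw, inv_le_inv₀ hc (by positivity), div_le_iff₀ (by positivity)]
    linarith
  exact ⟨hc, (Real.abs_log_le_inv_add_self hc.le).trans (by linarith)⟩

theorem continuousOn_integral_log (hμ : ∀ᵐ x ∂μ, x ∈ Icc a b)
    (hH : Tendsto (cauchyTransform μ) (𝓝[>] b) (𝓝 H)) (hRc : ContinuousOn R (Icc 0 H))
    (hR : ∀ t ∈ Ioc 0 H, cauchyTransform μ (t⁻¹ + R t) = t) :
    ContinuousOn (fun t => ∫ x, Real.log (1 + t * R t - t * x) ∂μ) (Icc 0 H) := by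
  obtain ⟨M, hM⟩ := isCompact_Icc.exists_bound_of_continuousOn hRc
  obtain ⟨C, hC⟩ : ∃ C, ∀ t ∈ Icc 0 H, ∀ x ∈ Icc a b, |R t - x| ≤ C := by
    refine ⟨M + (|a| + |b|), fun t ht x hx => ?_⟩
    have hx' : |x| ≤ |a| + |b| := abs_le.2 ⟨by linarith [neg_abs_le a, abs_nonneg b, hx.1],
      by linarith [le_abs_self b, abs_nonneg a, hx.2]⟩
    have hRt : |R t| ≤ M := by simpa using hM t ht
    linarith [abs_sub (R t) x]
  have hbound {t x : ℝ} (ht : t ∈ Icc 0 H) (hx : x ∈ Icc a b) (hxb : x < b) :=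
    abs_log_one_add_mul_sub_mul_le hμ hH hRc hR hC ht hx hxb
  have hb := ae_lt_of_tendsto_cauchyTransform hμ hH
  refine continuousOn_of_dominated (fun t _ =>
      (by fun_prop : Measurable fun x => Real.log (1 + t * R t - t * x)).aestronglyMeasurable)
    (fun t ht => ?_) ((integrable_const (2 + H * C)).add
      ((integrable_inv_sub_of_tendsto hμ hH).const_mul C)) ?_
  · filter_upwards [hμ, hb] with x hx hxb
    exact (hbound ht hx hxb).2
  · filter_upwards [hμ, hb] with x hx hxb
    exact ContinuousOn.log (by fun_prop) fun t ht => (hbound ht hx hxb).1.ne'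

theorem hasDerivAt_fBetaTwo (hμ : ∀ᵐ x ∂μ, x ∈ Icc a b)
    (hH : Tendsto (cauchyTransform μ) (𝓝[>] b) (𝓝 H)) (hRc : ContinuousOn R (Icc 0 H))
    (hR : ∀ t ∈ Ioc 0 H, cauchyTransform μ (t⁻¹ + R t) = t) {t : ℝ} (ht : t ∈ Ioo 0 H) :
    HasDerivAt (fBetaTwo μ R) (R t) t := by
  set z : ℝ → ℝ := fun s => s⁻¹ + R s with hz_def
  have hzt : b < z t := lt_inv_add_of_mem_Ioo hμ hH hRc hR ht
  have hnhds : Ioo 0 H ∈ 𝓝 t := Ioo_mem_nhds ht.1 ht.2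
  set D := -∫ x, ((z t - x) ^ 2)⁻¹ ∂μ
  have hD0 : D ≠ 0 := neg_ne_zero.2 (integral_inv_sq_sub_pos hμ hzt).ne'
  have hz : HasDerivAt z D⁻¹ t :=
    HasDerivAt.of_local_left_inverse
      ((continuousOn_inv_add hRc).continuousAt (mem_of_superset hnhds Ioo_subset_Ioc_self))
      (hasDerivAt_cauchyTransform hμ hzt) hD0
      (by filter_upwards [hnhds] with s hs using hR s (Ioo_subset_Ioc_self hs))
  have hG := (hasDerivAt_logPotential hμ hzt).comp t hz
  rw [hR t (Ioo_subset_Ioc_self ht)] at hG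
  have heq : (fun s => s * z s - 1 - Real.log s - logPotential μ (z s)) =ᶠ[𝓝 t]
      fBetaTwo μ R := by
    filter_upwards [hnhds] with s hs
    have hs0 : s ≠ 0 := hs.1.ne'
    have hfac : ∀ x, 1 + s * R s - s * x = s * (s⁻¹ + R s - x) := fun x => by field_simp
    simp only [fBetaTwo, hfac, hz_def,
      integral_log_mul_sub hμ hs0 (lt_inv_add_of_mem_Ioo hμ hH hRc hR hs)]
    field_simp
    ring
  refine ((((((hasDerivAt_id t).mul hz).sub_const 1).sub (Real.hasDerivAt_log ht.1.ne')).sub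
    hG).congr_of_eventuallyEq heq.symm).congr_deriv ?_
  simp only [hz_def, id]
  field_simp
  ring

theorem fBetaTwo_eq_integral_of_mem_Icc (hμ : ∀ᵐ x ∂μ, x ∈ Icc a b)
    (hH : Tendsto (cauchyTransform μ) (𝓝[>] b) (𝓝 H)) (hRc : ContinuousOn R (Icc 0 H))
    (hR : ∀ t ∈ Ioc 0 H, cauchyTransform μ (t⁻¹ + R t) = t) {t : ℝ} (ht : t ∈ Icc 0 H) :
    fBetaTwo μ R t = ∫ s in 0..t, R s := by
  have hsub : Icc 0 t ⊆ Icc 0 H := Icc_subset_Icc_right ht.2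
  have hcont : ContinuousOn (fBetaTwo μ R) (Icc 0 H) :=
    (continuousOn_id.mul hRc).sub (continuousOn_integral_log hμ hH hRc hR)
  rw [intervalIntegral.integral_eq_sub_of_hasDerivAt_of_le ht.1 (hcont.mono hsub)
    (fun s hs => hasDerivAt_fBetaTwo hμ hH hRc hR ⟨hs.1, hs.2.trans_le ht.2⟩)
    ((hRc.mono hsub).intervalIntegrable_of_Icc ht.1)]
  simp [fBetaTwo]

end PositiveBranch

theorem f_beta_two_eq_integral_R_general (μ : Measure ℝ) (hμ : IsProbabilityMeasure μ)
    (lmin lmax : ℝ)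
    (hsupp : μ (Set.Icc lmin lmax)ᶜ = 0)
    (Htr : ℝ → ℝ) (hHtr : ∀ z, Htr z = ∫ lam, (z - lam)⁻¹ ∂μ)
    (Hmin Hmax : ℝ) (hHminneg : Hmin < 0) (hHmaxpos : 0 < Hmax)
    (hHmax : Filter.Tendsto Htr (nhdsWithin lmax (Set.Ioi lmax)) (nhds Hmax))
    (hHmin : Filter.Tendsto Htr (nhdsWithin lmin (Set.Iio lmin)) (nhds Hmin))
    (R : ℝ → ℝ) (hRcont : ContinuousOn R (Set.Icc Hmin Hmax))
    (hR : ∀ t, Hmin ≤ t → t ≤ Hmax → t ≠ 0 → Htr (1 / t + R t) = t) :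
    ∀ t ∈ Set.Icc Hmin Hmax,
      t * R t - (∫ lam, Real.log (1 + t * R t - t * lam) ∂μ)
        = ∫ s in (0 : ℝ)..t, R s := by
  obtain rfl : Htr = cauchyTransform μ := funext hHtr
  have hsupp' : ∀ᵐ x ∂μ, x ∈ Icc lmin lmax := mem_ae_iff.2 hsupp
  intro t ht
  change fBetaTwo μ R t = _
  rcases le_total 0 t with h0 | h0
  · refine fBetaTwo_eq_integral_of_mem_Icc hsupp' hHmax
      (hRcont.mono (Icc_subset_Icc_left hHminneg.le)) (fun s hs => ?_) ⟨h0, ht.2⟩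
    simpa only [one_div] using hR s (hHminneg.trans hs.1).le hs.2 hs.1.ne'
  · -- reflecting through `λ ↦ -λ` exchanges the two edges of the support
    have hRc : ContinuousOn (fun s => -R (-s)) (Icc 0 (-Hmin)) :=
      (hRcont.comp continuous_neg.continuousOn fun s hs =>
        ⟨le_neg.1 hs.2, by linarith [hs.1]⟩).neg
    have hR' : ∀ s ∈ Ioc 0 (-Hmin), cauchyTransform μ.neg (s⁻¹ + -R (-s)) = s :=
      fun s hs => by
        rw [cauchyTransform_neg, neg_add, neg_neg, ← inv_neg, ← one_div,
          hR (-s) (le_neg.1 hs.2) (by linarith [hs.1]) (neg_ne_zero.2 hs.1.ne'), neg_neg]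
    have hneg := fBetaTwo_eq_integral_of_mem_Icc (ae_mem_Icc_neg hsupp')
      (tendsto_cauchyTransform_neg hHmin) hRc hR' ⟨neg_nonneg.2 h0, neg_le_neg ht.1⟩
    rwa [fBetaTwo_neg, neg_neg, intervalIntegral.integral_neg, intervalIntegral.integral_comp_neg,
      neg_zero, neg_neg, intervalIntegral.integral_symm, neg_neg] at hneg

/-- For `t ∈ [H_min, H_max]`, the function
`f^{(2)}_μ(t) = t·R_μ(t) − ∫ log(1 + t·R_μ(t) − t·λ) dμ(λ)` equals `∫₀^t R_μ(s) ds`. -/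
theorem f_beta_two_eq_integral_R (μ : Measure ℝ) (hμ : IsProbabilityMeasure μ)
    (lmin lmax : ℝ) (hle : lmin ≤ lmax)
    (hsupp : μ (Set.Icc lmin lmax)ᶜ = 0)
    (hedge : ∀ ε : ℝ, 0 < ε → 0 < μ (Set.Ioi (lmax - ε)) ∧ 0 < μ (Set.Iio (lmin + ε)))
    (Htr : ℝ → ℝ) (hHtr : ∀ z, Htr z = ∫ lam, (z - lam)⁻¹ ∂μ)
    (Hmin Hmax : ℝ) (hHminneg : Hmin < 0) (hHmaxpos : 0 < Hmax)
    (hHmax : Filter.Tendsto Htr (nhdsWithin lmax (Set.Ioi lmax)) (nhds Hmax))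
    (hHmin : Filter.Tendsto Htr (nhdsWithin lmin (Set.Iio lmin)) (nhds Hmin))
    (R : ℝ → ℝ) (hRcont : ContinuousOn R (Set.Icc Hmin Hmax))
    (hR : ∀ t, Hmin ≤ t → t ≤ Hmax → t ≠ 0 → Htr (1 / t + R t) = t) :
    ∀ t ∈ Set.Icc Hmin Hmax,
      t * R t - (∫ lam, Real.log (1 + t * R t - t * lam) ∂μ)
        = ∫ s in (0 : ℝ)..t, R s :=
  f_beta_two_eq_integral_R_general μ hμ lmin lmax hsupp Htr hHtr Hmin Hmax hHminneg hHmaxpos hHmax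
    hHmin R hRcont hR
end
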